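/- Let a, b, c be real numbers with b ≠ 0, let a₀ : ℝ → ℝ and let a₁ : ℝ → ℝ be twice continuously differentiable. Define φ(x̄) = (x̄ − c(1 + a·x̄))/(b(1 + a·x̄)), t(x̄) = 1 + a·x̄, ā₁(x̄) = a₁(φ(x̄))/(b³ t(x̄)⁶), and ā₀(x̄) = a₀(φ(x̄))/(b⁴ t(x̄)⁸) − 3a·a₁(φ(x̄))/(b³ t(x̄)⁷) on {x̄ : t(x̄) ≠ 0}. Then for every x̄ with t(x̄) ≠ 0 and a₁(φ(x̄)) ≠ 0, one has (14ā₀(x̄)² − 14ā₀(x̄)ā₁′(x̄) + 3ā₁(x̄)ā₁″(x̄))³/(27ā₁(x̄)⁸) = (14a₀² − 14a₀a₁′ + 3a₁a₁″)³/(27a₁⁸) evaluated at φ(x̄). -/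

import Mathlib

/-- The point transformation of the independent variable:
`φ(x̄) = (x̄ − c(1 + a x̄)) / (b(1 + a x̄))`. -/
noncomputable def phi (a b c : ℝ) (x : ℝ) : ℝ :=
  (x - c * (1 + a * x)) / (b * (1 + a * x))

/-- The transformed coefficient `ā₁(x̄) = a₁(φ(x̄)) / (b³ (1 + a x̄)⁶)`
for the canonical form `y⁽⁴⁾ + a₁ y′ + a₀ y = 0`. -/
noncomputable def abar1 (a b c : ℝ) (a1 : ℝ → ℝ) (x : ℝ) : ℝ :=
  a1 (phi a b c x) / (b ^ 3 * (1 + a * x) ^ 6)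

/-- The transformed coefficient
`ā₀(x̄) = a₀(φ(x̄))/(b⁴ (1+a x̄)⁸) − 3a a₁(φ(x̄))/(b³ (1+a x̄)⁷)`
for the canonical form `y⁽⁴⁾ + a₁ y′ + a₀ y = 0`. -/
noncomputable def abar0 (a b c : ℝ) (a0 a1 : ℝ → ℝ) (x : ℝ) : ℝ :=
  a0 (phi a b c x) / (b ^ 4 * (1 + a * x) ^ 8)
    - 3 * a * a1 (phi a b c x) / (b ^ 3 * (1 + a * x) ^ 7)

/-!
The derivative of `φ` is `1 / (b (1 + a x̄)²)`, so differentiating `f ∘ φ / (bᵏ tⁿ)` raises the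
powers of `b` and `t = 1 + a x̄` by one and two. Consequently `ā₁ = a₁ ∘ φ / (b t²)³`, and the
numerator `14 ā₀² − 14 ā₀ ā₁′ + 3 ā₁ ā₁″` equals the original numerator at `φ(x̄)` divided by
`(b t²)⁸`: the terms in `a` coming from differentiating `t⁻⁶` cancel exactly against the
correction `−3a a₁` in `ā₀`. Hence both the cube of the numerator and `ā₁⁸` carry the factor
`(b t²)⁻²⁴`, which cancels in `Ψ₄^{2,3}`.
-/

theorem hasDerivAt_phi {a b c x : ℝ} (hb : b ≠ 0) (ht : 1 + a * x ≠ 0) :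
    HasDerivAt (phi a b c) (1 / (b * (1 + a * x) ^ 2)) x := by
  have hnum : HasDerivAt (fun x : ℝ => x - c * (1 + a * x)) (1 - c * a) x := by
    simpa using (hasDerivAt_id' x).fun_sub
      ((((hasDerivAt_id x).const_mul a).const_add 1).const_mul c)
  have hden : HasDerivAt (fun x : ℝ => b * (1 + a * x)) (b * a) x := by
    simpa using (((hasDerivAt_id x).const_mul a).const_add 1).const_mul b
  refine (hnum.div hden (mul_ne_zero hb ht)).congr_deriv ?_
  field_simp
  ring

theorem hasDerivAt_comp_phi_div {a b c x f' : ℝ} {f : ℝ → ℝ} (k n : ℕ) (hb : b ≠ 0)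
    (ht : 1 + a * x ≠ 0) (hf : HasDerivAt f f' (phi a b c x)) :
    HasDerivAt (fun x => f (phi a b c x) / (b ^ k * (1 + a * x) ^ n))
      (f' / (b ^ (k + 1) * (1 + a * x) ^ (n + 2))
        - n * a * f (phi a b c x) / (b ^ k * (1 + a * x) ^ (n + 1))) x := by
  have hden : HasDerivAt (fun x : ℝ => b ^ k * (1 + a * x) ^ n)
      (b ^ k * (n * a * (1 + a * x) ^ n / (1 + a * x))) x := by
    refine (((((hasDerivAt_id x).const_mul a).const_add 1).pow n).const_mul _).congr_deriv ?_
    rcases n with _ | n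
    · simp
    · field_simp
      simp only [id, Nat.add_sub_cancel]
      ring
  refine ((hf.comp x (hasDerivAt_phi hb ht)).div hden
    (mul_ne_zero (pow_ne_zero _ hb) (pow_ne_zero _ ht))).congr_deriv ?_
  rw [Function.comp_apply]
  field_simp
  ring

theorem hasDerivAt_abar1 {a b c x : ℝ} {a1 : ℝ → ℝ} (hb : b ≠ 0) (ht : 1 + a * x ≠ 0)
    (ha1 : DifferentiableAt ℝ a1 (phi a b c x)) :
    HasDerivAt (abar1 a b c a1)
      (deriv a1 (phi a b c x) / (b ^ 4 * (1 + a * x) ^ 8)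
        - 6 * a * a1 (phi a b c x) / (b ^ 3 * (1 + a * x) ^ 7)) x :=
  (hasDerivAt_comp_phi_div 3 6 hb ht ha1.hasDerivAt).congr_deriv (by norm_num)

theorem iteratedDeriv_two_abar1 {a b c x : ℝ} {a1 : ℝ → ℝ} (hb : b ≠ 0) (ht : 1 + a * x ≠ 0)
    (ha1 : ContDiff ℝ 2 a1) :
    iteratedDeriv 2 (abar1 a b c a1) x
      = iteratedDeriv 2 a1 (phi a b c x) / (b ^ 5 * (1 + a * x) ^ 10)
        - 14 * a * deriv a1 (phi a b c x) / (b ^ 4 * (1 + a * x) ^ 9)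
        + 42 * a ^ 2 * a1 (phi a b c x) / (b ^ 3 * (1 + a * x) ^ 8) := by
  have hd1 : Differentiable ℝ a1 := ha1.differentiable two_ne_zero
  have hd2 : Differentiable ℝ (deriv a1) := ha1.differentiable_deriv_two
  have hderiv : deriv (abar1 a b c a1) =ᶠ[nhds x] fun y =>
      deriv a1 (phi a b c y) / (b ^ 4 * (1 + a * y) ^ 8)
        - 6 * a * (a1 (phi a b c y) / (b ^ 3 * (1 + a * y) ^ 7)) := by
    have hopen : IsOpen {y : ℝ | 1 + a * y ≠ 0} :=
      isOpen_ne_fun (by fun_prop) continuous_const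
    filter_upwards [hopen.mem_nhds ht] with y hy
    rw [(hasDerivAt_abar1 hb hy (hd1 _)).deriv, mul_div_assoc]
  have h2 := (hasDerivAt_comp_phi_div 4 8 hb ht (hd2 (phi a b c x)).hasDerivAt).fun_sub
    ((hasDerivAt_comp_phi_div 3 7 hb ht (hd1 (phi a b c x)).hasDerivAt).const_mul (6 * a))
  simp only [iteratedDeriv_succ, iteratedDeriv_zero]
  rw [hderiv.deriv_eq, h2.deriv]
  field_simp
  ring

theorem invariant_numerator_transform {a b t A0 A1 D1 D2 : ℝ} (hb : b ≠ 0) (ht : t ≠ 0) :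
    14 * (A0 / (b ^ 4 * t ^ 8) - 3 * a * A1 / (b ^ 3 * t ^ 7)) ^ 2
      - 14 * (A0 / (b ^ 4 * t ^ 8) - 3 * a * A1 / (b ^ 3 * t ^ 7))
        * (D1 / (b ^ 4 * t ^ 8) - 6 * a * A1 / (b ^ 3 * t ^ 7))
      + 3 * (A1 / (b ^ 3 * t ^ 6))
        * (D2 / (b ^ 5 * t ^ 10) - 14 * a * D1 / (b ^ 4 * t ^ 9)
          + 42 * a ^ 2 * A1 / (b ^ 3 * t ^ 8))
      = (14 * A0 ^ 2 - 14 * A0 * D1 + 3 * A1 * D2) / (b ^ 8 * t ^ 16) := by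
  field_simp
  ring

theorem cube_div_pow_eight_weight_cancel {b t : ℝ} (hb : b ≠ 0) (ht : t ≠ 0) (E A : ℝ) :
    (E / (b ^ 8 * t ^ 16)) ^ 3 / (27 * (A / (b ^ 3 * t ^ 6)) ^ 8) = E ^ 3 / (27 * A ^ 8) := by
  field_simp

/-- the invariant `Ψ₄^{2,3} = (14a₀² − 14a₀a₁′ + 3a₁a₁″)³/(27a₁⁸)`
of the canonical form `y⁽⁴⁾ + a₁ y′ + a₀ y = 0` is an absolute invariant of the
structure invariance group. -/
theorem stmt_15 (a b c : ℝ) (hb : b ≠ 0) (a0 a1 : ℝ → ℝ) (ha1 : ContDiff ℝ 2 a1) :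
    ∀ xb : ℝ, 1 + a * xb ≠ 0 → a1 (phi a b c xb) ≠ 0 →
      (14 * (abar0 a b c a0 a1 xb) ^ 2
          - 14 * abar0 a b c a0 a1 xb * deriv (abar1 a b c a1) xb
          + 3 * abar1 a b c a1 xb * iteratedDeriv 2 (abar1 a b c a1) xb) ^ 3
        / (27 * (abar1 a b c a1 xb) ^ 8)
      = (14 * (a0 (phi a b c xb)) ^ 2
          - 14 * a0 (phi a b c xb) * deriv a1 (phi a b c xb)
          + 3 * a1 (phi a b c xb) * iteratedDeriv 2 a1 (phi a b c xb)) ^ 3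
        / (27 * (a1 (phi a b c xb)) ^ 8) := by
  intro xb ht _
  rw [(hasDerivAt_abar1 hb ht (ha1.differentiable two_ne_zero _)).deriv,
    iteratedDeriv_two_abar1 hb ht ha1, abar0, abar1, invariant_numerator_transform hb ht,
    cube_div_pow_eight_weight_cancel hb ht]
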